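/- arXiv:1606.00706 — 3 statements merged into one kernel-verified Lean document; each statement's English description precedes it below -/
import Mathlib

section
/- Let s ≥ 0 be an integer and let (a_n)_{n≥0} be a sequence of rational numbers for which there exist a real number Δ > 1 and positive integers δ_n with δ_n ≤ Δ^{n+1} and δ_n·a_n ∈ ℤ for all n ≥ 0. Then the following are equivalent: (1) there exist positive integers b and C such that D_{bn}^s · C^{n+1} · a_n ∈ ℤ for all n ≥ 0; (2) there exists a positive integer b such that for all sufficiently large primes p and all n ≥ 0 with a_n ≠ 0, one has v_p(a_n) ≥ −s·v_p(D_{bn}). -/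
/-!
For `c ≠ 0` and `a ≠ 0`, `c * a` is an integer iff `v_p(a) ≥ -v_p(c)` at every prime `p`, so
both conditions are statements about valuations of the multiplier `D (b n) ^ s * C ^ (n + 1)`.
Primes `p > C` do not divide `C`, which gives (1) ⇒ (2). Conversely, (2) settles the primes
`p ≥ p₀`. For the finitely many primes `p < p₀`, integrality of `δₙ aₙ` gives
`v_p(aₙ) ≥ -v_p(δₙ)`, and `δₙ ≤ Δ ^ (n + 1) ≤ 2 ^ (K (n + 1))` bounds this by `-K (n + 1)`,
which `C = (p₀!) ^ K` compensates.
-/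

/-- `D n = lcm {1, 2, …, n}`, with `D 0 = 1`. -/
def D (n : ℕ) : ℕ := (Finset.Icc 1 n).lcm id

lemma D_ne_zero (n : ℕ) : D n ≠ 0 := by
  rw [Ne, D, Finset.lcm_eq_zero_iff]
  simp

theorem Rat.exists_int_eq_of_forall_padicValRat_nonneg {q : ℚ}
    (h : ∀ p, p.Prime → 0 ≤ padicValRat p q) : ∃ m : ℤ, q = m := by
  refine ⟨q.num, (Rat.coe_int_num_of_den_eq_one ?_).symm⟩
  by_contra hden
  set p := q.den.minFac
  have hp : p.Prime := Nat.minFac_prime hden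
  have := Fact.mk hp
  have hp_den : p ∣ q.den := Nat.minFac_dvd _
  have hp_num : ¬(p : ℤ) ∣ q.num := fun hnum =>
    hp.one_lt.ne' (Nat.eq_one_of_dvd_coprimes q.reduced (Int.natCast_dvd.1 hnum) hp_den)
  have hval := h p hp
  rw [padicValRat_def, padicValInt.eq_zero_of_not_dvd hp_num] at hval
  have := one_le_padicValNat_of_dvd q.den_ne_zero hp_den
  omega

theorem padicValRat_natCast_mul {p c : ℕ} [Fact p.Prime] {a : ℚ} (hc : c ≠ 0) (ha : a ≠ 0) :
    padicValRat p (c * a) = padicValNat p c + padicValRat p a := by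
  rw [padicValRat.mul (Nat.cast_ne_zero.2 hc) ha, padicValRat.of_nat]

theorem exists_int_natCast_mul_eq_iff {c : ℕ} {a : ℚ} (hc : c ≠ 0) (ha : a ≠ 0) :
    (∃ m : ℤ, (c : ℚ) * a = m) ↔ ∀ p, p.Prime → -(padicValNat p c : ℤ) ≤ padicValRat p a := by
  constructor
  · rintro ⟨m, hm⟩ p hp
    have := Fact.mk hp
    have hval := padicValRat_natCast_mul (p := p) hc ha
    rw [hm, padicValRat.of_int] at hval
    omega
  · intro h
    refine Rat.exists_int_eq_of_forall_padicValRat_nonneg fun p hp => ?_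
    have := Fact.mk hp
    rw [padicValRat_natCast_mul hc ha]
    linarith [h p hp]

theorem padicValNat_le_of_le_two_pow {p d k : ℕ} (hp : p.Prime) (h : d ≤ 2 ^ k) :
    padicValNat p d ≤ k :=
  calc padicValNat p d ≤ Nat.log p d := padicValNat_le_nat_log d
    _ ≤ Nat.log 2 d := Nat.log_anti_left one_lt_two hp.two_le
    _ ≤ Nat.log 2 (2 ^ k) := Nat.log_mono_right h
    _ = k := Nat.log_pow one_lt_two k

theorem exists_padicValNat_le_mul_of_le_pow {δ : ℕ → ℕ} {Δ : ℝ}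
    (h : ∀ n, (δ n : ℝ) ≤ Δ ^ (n + 1)) :
    ∃ K : ℕ, ∀ p, p.Prime → ∀ n, padicValNat p (δ n) ≤ K * (n + 1) := by
  obtain ⟨K, hK⟩ := pow_unbounded_of_one_lt Δ one_lt_two
  have hΔ : 0 ≤ Δ := by simpa using (Nat.cast_nonneg (δ 0)).trans (h 0)
  refine ⟨K, fun p hp n => padicValNat_le_of_le_two_pow hp ?_⟩
  have : (δ n : ℝ) ≤ ((2 ^ (K * (n + 1)) : ℕ) : ℝ) :=
    calc (δ n : ℝ) ≤ Δ ^ (n + 1) := h n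
      _ ≤ ((2 : ℝ) ^ K) ^ (n + 1) := pow_le_pow_left₀ hΔ hK.le _
      _ = ((2 ^ (K * (n + 1)) : ℕ) : ℝ) := by push_cast; rw [pow_mul]
  exact_mod_cast this

theorem padicValNat_pow_mul_pow {p x y : ℕ} [Fact p.Prime] (hx : x ≠ 0) (hy : y ≠ 0) (i j : ℕ) :
    padicValNat p (x ^ i * y ^ j) = i * padicValNat p x + j * padicValNat p y := by
  rw [padicValNat.mul (pow_ne_zero _ hx) (pow_ne_zero _ hy), padicValNat.pow, padicValNat.pow]

theorem le_padicValNat_factorial_pow {p n : ℕ} (hp : p.Prime) (hpn : p ≤ n) (K : ℕ) :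
    K ≤ padicValNat p (n.factorial ^ K) := by
  have := Fact.mk hp
  rw [padicValNat.pow]
  exact Nat.le_mul_of_pos_right K
    (one_le_padicValNat_of_dvd n.factorial_ne_zero (Nat.dvd_factorial hp.pos hpn))

theorem neg_mul_padicValNat_le_padicValRat_of_pow_mul_pow_mul_eq {p d C s k : ℕ} {a : ℚ}
    (hp : p.Prime) (hd : d ≠ 0) (hC : 0 < C) (hCp : C < p) (ha : a ≠ 0)
    (h : ∃ m : ℤ, (d : ℚ) ^ s * (C : ℚ) ^ k * a = m) :
    -(s : ℤ) * padicValNat p d ≤ padicValRat p a := by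
  have := Fact.mk hp
  have hvC : padicValNat p C = 0 :=
    padicValNat.eq_zero_of_not_dvd fun hdvd => (Nat.le_of_dvd hC hdvd).not_gt hCp
  have hc : d ^ s * C ^ k ≠ 0 := mul_ne_zero (pow_ne_zero s hd) (pow_ne_zero k hC.ne')
  have := (exists_int_natCast_mul_eq_iff hc ha).1 (by exact_mod_cast h) p hp
  rwa [padicValNat_pow_mul_pow hd hC.ne', hvC, mul_zero, add_zero, Nat.cast_mul, ← neg_mul] at this

theorem exists_int_pow_mul_pow_mul_eq {p₀ d C δ s k K : ℕ} {a : ℚ} (hd : d ≠ 0) (hC : C ≠ 0)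
    (hδ : δ ≠ 0) (hδa : ∃ m : ℤ, (δ : ℚ) * a = m)
    (hδK : ∀ p, p.Prime → padicValNat p δ ≤ K * k)
    (hCK : ∀ p, p.Prime → p < p₀ → K ≤ padicValNat p C)
    (hlarge : ∀ p, p.Prime → p₀ ≤ p → a ≠ 0 → -(s : ℤ) * padicValNat p d ≤ padicValRat p a) :
    ∃ m : ℤ, (d : ℚ) ^ s * (C : ℚ) ^ k * a = m := by
  rcases eq_or_ne a 0 with rfl | ha
  · exact ⟨0, by simp⟩
  have hc : d ^ s * C ^ k ≠ 0 := mul_ne_zero (pow_ne_zero s hd) (pow_ne_zero k hC)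
  suffices h : ∃ m : ℤ, ((d ^ s * C ^ k : ℕ) : ℚ) * a = m by exact_mod_cast h
  refine (exists_int_natCast_mul_eq_iff hc ha).2 fun p hp => ?_
  have := Fact.mk hp
  rw [padicValNat_pow_mul_pow hd hC]
  rcases le_or_gt p₀ p with hp₀ | hp₀
  · rw [Nat.cast_add, Nat.cast_mul]
    linarith [hlarge p hp hp₀ ha, Nat.cast_nonneg (α := ℤ) (k * padicValNat p C)]
  · have hvδ : padicValNat p δ ≤ s * padicValNat p d + k * padicValNat p C :=
      calc padicValNat p δ ≤ k * K := (hδK p hp).trans_eq (mul_comm _ _)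
        _ ≤ k * padicValNat p C := Nat.mul_le_mul_left _ (hCK p hp hp₀)
        _ ≤ _ := Nat.le_add_left _ _
    exact (neg_le_neg (by exact_mod_cast hvδ)).trans
      ((exists_int_natCast_mul_eq_iff hδ ha).1 hδa p hp)

theorem mem_filtration_iff_general (s : ℕ) (a : ℕ → ℚ)
    (Δ : ℝ) (δ : ℕ → ℕ) (hδpos : ∀ n, 0 < δ n)
    (hδle : ∀ n, (δ n : ℝ) ≤ Δ ^ (n + 1))
    (hδint : ∀ n, ∃ m : ℤ, (δ n : ℚ) * a n = (m : ℚ)) :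
    (∃ b C : ℕ, 0 < b ∧ 0 < C ∧ ∀ n : ℕ, ∃ m : ℤ,
        (D (b * n) : ℚ) ^ s * (C : ℚ) ^ (n + 1) * a n = (m : ℚ)) ↔
    (∃ b : ℕ, 0 < b ∧ ∃ p₀ : ℕ, ∀ p : ℕ, p.Prime → p₀ ≤ p → ∀ n : ℕ, a n ≠ 0 →
        -(s : ℤ) * padicValNat p (D (b * n)) ≤ padicValRat p (a n)) := by
  constructor
  · rintro ⟨b, C, hb, hC, hint⟩
    exact ⟨b, hb, C + 1, fun p hp hpC n han =>
      neg_mul_padicValNat_le_padicValRat_of_pow_mul_pow_mul_eq hp (D_ne_zero _) hC hpC han (hint n)⟩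
  · rintro ⟨b, hb, p₀, hlarge⟩
    obtain ⟨K, hK⟩ := exists_padicValNat_le_mul_of_le_pow hδle
    exact ⟨b, p₀.factorial ^ K, hb, by positivity, fun n =>
      exists_int_pow_mul_pow_mul_eq (D_ne_zero _) (by positivity) (hδpos n).ne' (hδint n)
        (fun p hp => hK p hp n) (fun p hp hp₀ => le_padicValNat_factorial_pow hp hp₀.le K)
        (fun p hp hp₀ => hlarge p hp hp₀ n)⟩

/-- Characterization of membership in the filtration level `𝒢ₛ` for a sequence of rationals
with geometrically bounded denominators: the existence of positive integers `b`, `C` with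
`D (b*n)^s · C^(n+1) · aₙ ∈ ℤ` for all `n` is equivalent to the existence of a positive
integer `b` such that `v_p(aₙ) ≥ −s·v_p(D (b*n))` for all sufficiently large primes `p`
and all `n` with `aₙ ≠ 0`. -/
theorem mem_filtration_iff (s : ℕ) (a : ℕ → ℚ)
    (Δ : ℝ) (hΔ : 1 < Δ) (δ : ℕ → ℕ) (hδpos : ∀ n, 0 < δ n)
    (hδle : ∀ n, (δ n : ℝ) ≤ Δ ^ (n + 1))
    (hδint : ∀ n, ∃ m : ℤ, (δ n : ℚ) * a n = (m : ℚ)) :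
    (∃ b C : ℕ, 0 < b ∧ 0 < C ∧ ∀ n : ℕ, ∃ m : ℤ,
        (D (b * n) : ℚ) ^ s * (C : ℚ) ^ (n + 1) * a n = (m : ℚ)) ↔
    (∃ b : ℕ, 0 < b ∧ ∃ p₀ : ℕ, ∀ p : ℕ, p.Prime → p₀ ≤ p → ∀ n : ℕ, a n ≠ 0 →
        -(s : ℤ) * padicValNat p (D (b * n)) ≤ padicValRat p (a n)) :=
  mem_filtration_iff_general s a Δ δ hδpos hδle hδint
end

section
/- Let (a_n)_{n≥0} be a sequence of algebraic numbers and let s ≥ 0 and b, C ≥ 1 be integers such that D_{bn}^s · C^{n+1} · a_n is an algebraic integer for all n ≥ 0. Then there exist positive integers b' and C' such that D_{b'n}^s · C'^{n+1} · (n+1) · a_{n+1} is an algebraic integer for all n ≥ 0; for instance b' = 2b and C' = C²·D_b^s work. In particular, the denominator property defining the filtration level 𝒢_s is stable under differentiation of the power series Σ a_n z^n. -/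
lemma D_pos (n : ℕ) : 0 < D n := by
  rw [Nat.pos_iff_ne_zero]
  intro h
  rw [D, Finset.lcm_eq_zero_iff] at h
  simp at h

lemma D_dvd {m n : ℕ} (h : m ≤ n) : D m ∣ D n := by
  apply Finset.lcm_dvd
  intro x hx
  apply Finset.dvd_lcm
  simp only [Finset.mem_Icc] at hx ⊢
  exact ⟨hx.1, hx.2.trans h⟩

lemma nat_isIntegral (k : ℕ) : IsIntegral ℤ ((k : ℂ)) := by
  simpa using isIntegral_algebraMap (R := ℤ) (A := ℂ) (x := (k : ℤ))

/-- Stability of the filtration level `𝒢ₛ` under differentiation: if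
`D (b*n)^s · C^(n+1) · aₙ` is an algebraic integer for all `n`, then
`D (b'*n)^s · C'^(n+1) · (n+1) · a_{n+1}` is an algebraic integer for all `n`,
where `b' = 2*b` and `C' = C^2 * D b ^ s`. -/
theorem derivative_denominators (a : ℕ → ℂ) (s b C : ℕ) (hb : 1 ≤ b) (hC : 1 ≤ C)
    (ha : ∀ n : ℕ, IsIntegral ℤ ((D (b * n) : ℂ) ^ s * (C : ℂ) ^ (n + 1) * a n)) :
    (∀ n : ℕ, IsIntegral ℤ
      ((D (2 * b * n) : ℂ) ^ s * ((C ^ 2 * D b ^ s : ℕ) : ℂ) ^ (n + 1) * (n + 1) * a (n + 1))) ∧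
    (∃ b' C' : ℕ, 0 < b' ∧ 0 < C' ∧ ∀ n : ℕ, IsIntegral ℤ
      ((D (b' * n) : ℂ) ^ s * (C' : ℂ) ^ (n + 1) * (n + 1) * a (n + 1))) := by
  have main : ∀ n : ℕ, IsIntegral ℤ
      ((D (2 * b * n) : ℂ) ^ s * ((C ^ 2 * D b ^ s : ℕ) : ℂ) ^ (n + 1) * (n + 1) * a (n + 1)) := by
    intro n
    rcases Nat.eq_zero_or_pos n with rfl | hn
    · have h1 := ha 1
      have hD0 : D (2 * b * 0) = 1 := by simp [D]
      have key : (D (2 * b * 0) : ℂ) ^ s * ((C ^ 2 * D b ^ s : ℕ) : ℂ) ^ (0 + 1)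
            * ((0 : ℕ) + 1) * a (0 + 1)
          = (D (b * 1) : ℂ) ^ s * (C : ℂ) ^ (1 + 1) * a 1 := by
        rw [hD0, mul_one b]
        push_cast
        ring
      rw [key]
      exact h1
    · have hle : b * (n + 1) ≤ 2 * b * n := by nlinarith
      obtain ⟨t, ht⟩ := D_dvd hle
      have key : (D (2 * b * n) : ℂ) ^ s * ((C ^ 2 * D b ^ s : ℕ) : ℂ) ^ (n + 1)
            * ((n : ℕ) + 1) * a (n + 1)
          = ((t ^ s * C ^ n * D b ^ (s * (n + 1)) * (n + 1) : ℕ) : ℂ)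
            * ((D (b * (n + 1)) : ℂ) ^ s * (C : ℂ) ^ (n + 1 + 1) * a (n + 1)) := by
        rw [ht]
        push_cast
        ring
      rw [key]
      exact (nat_isIntegral _).mul (ha (n + 1))
  refine ⟨main, 2 * b, C ^ 2 * D b ^ s, by omega, ?_, main⟩
  have := D_pos b
  positivity
end

section
/- Let (a_n)_{n≥0} and (b_n)_{n≥0} be sequences of algebraic numbers, let s ≥ 0 and b, b', C, C' ≥ 1 be integers such that D_{bn}^s · C^{n+1} · a_n and D_{b'n}^s · C'^{n+1} · b_n are algebraic integers for all n ≥ 0, and let λ, μ be algebraic numbers. Then there exist positive integers b'' and C'' such that D_{b''n}^s · C''^{n+1} · (λ·a_n + μ·b_n) is an algebraic integer for all n ≥ 0. In particular, the set of sequences with this denominator property is closed under algebraic-number linear combinations, so that 𝒢_s is a vector space over the algebraic numbers. -/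
lemma D_dvd_D {m m' : ℕ} (h : m ≤ m') : D m ∣ D m' :=
  Finset.lcm_mono (Finset.Icc_subset_Icc_right h)

lemma exists_pos_nat_mul_isIntegral_of_isAlgebraic {A : Type*} [CommRing A] [Algebra ℚ A]
    {z : A} (hz : IsAlgebraic ℚ z) : ∃ d : ℕ, 0 < d ∧ IsIntegral ℤ ((d : A) * z) := by
  obtain ⟨y, hy, hyz⟩ :=
    ((IsFractionRing.isAlgebraic_iff ℤ ℚ A).mpr hz).exists_integral_multiple
  refine ⟨y.natAbs, Int.natAbs_pos.mpr hy, ?_⟩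
  have hsign : (y.natAbs : A) * z = y.sign • y • z := by
    rw [smul_smul, Int.sign_mul_self, zsmul_eq_mul, Int.cast_natCast]
  exact hsign ▸ hyz.smul y.sign

lemma IsIntegral.natCast_mul_of_dvd {A : Type*} [CommRing A] {m m' : ℕ} {x : A} (h : m ∣ m')
    (hx : IsIntegral ℤ ((m : A) * x)) : IsIntegral ℤ ((m' : A) * x) := by
  obtain ⟨k, rfl⟩ := h
  simpa only [Nat.cast_mul, mul_comm (m : A), mul_assoc] using (isIntegral_natCast k).mul hx

lemma isIntegral_D_pow_mul_mul {A : Type*} [CommRing A] {s m m' n C d E : ℕ} {x lam : A}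
    (hm : m ≤ m') (hCE : C * d ∣ E) (hx : IsIntegral ℤ ((D m : A) ^ s * (C : A) ^ (n + 1) * x))
    (hlam : IsIntegral ℤ ((d : A) * lam)) :
    IsIntegral ℤ ((D m' : A) ^ s * (E : A) ^ (n + 1) * (lam * x)) := by
  have hscaled : IsIntegral ℤ (((D m ^ s * (C * d) ^ (n + 1) : ℕ) : A) * (lam * x)) := by
    have h := ((isIntegral_natCast (R := ℤ) (d ^ n)).mul hlam).mul hx
    convert h using 1
    push_cast
    ring
  have hdvd : D m ^ s * (C * d) ^ (n + 1) ∣ D m' ^ s * E ^ (n + 1) :=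
    mul_dvd_mul (pow_dvd_pow_of_dvd (D_dvd_D hm) s) (pow_dvd_pow_of_dvd hCE (n + 1))
  simpa only [Nat.cast_mul, Nat.cast_pow] using hscaled.natCast_mul_of_dvd hdvd

theorem linear_combination_denominators_general (a b : ℕ → ℂ) (s bb bb' C C' : ℕ)
    (hC : 1 ≤ C) (hC' : 1 ≤ C')
    (ha : ∀ n : ℕ, IsIntegral ℤ ((D (bb * n) : ℂ) ^ s * (C : ℂ) ^ (n + 1) * a n))
    (hb : ∀ n : ℕ, IsIntegral ℤ ((D (bb' * n) : ℂ) ^ s * (C' : ℂ) ^ (n + 1) * b n))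
    (lam mu : ℂ) (hlam : IsAlgebraic ℚ lam) (hmu : IsAlgebraic ℚ mu) :
    ∃ b'' C'' : ℕ, 0 < b'' ∧ 0 < C'' ∧ ∀ n : ℕ,
      IsIntegral ℤ ((D (b'' * n) : ℂ) ^ s * (C'' : ℂ) ^ (n + 1) * (lam * a n + mu * b n)) := by
  obtain ⟨dl, hdl, hdll⟩ := exists_pos_nat_mul_isIntegral_of_isAlgebraic hlam
  obtain ⟨dm, hdm, hdmm⟩ := exists_pos_nat_mul_isIntegral_of_isAlgebraic hmu
  refine ⟨max bb bb' + 1, C * dl * (C' * dm), by omega, by positivity, fun n => ?_⟩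
  rw [mul_add]
  exact (isIntegral_D_pow_mul_mul (by gcongr; omega) (dvd_mul_right _ _) (ha n) hdll).add
    (isIntegral_D_pow_mul_mul (by gcongr; omega) (dvd_mul_left _ _) (hb n) hdmm)

/-- `𝒢ₛ` is a vector space over the algebraic numbers: if `D (b*n)^s · C^(n+1) · aₙ` and
`D (b'*n)^s · C'^(n+1) · bₙ` are algebraic integers for all `n`, and `lam`, `mu` are
algebraic numbers, then there exist positive integers `b''`, `C''` such that
`D (b''*n)^s · C''^(n+1) · (lam·aₙ + mu·bₙ)` is an algebraic integer for all `n`. -/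
theorem linear_combination_denominators (a b : ℕ → ℂ) (s bb bb' C C' : ℕ)
    (hbb : 1 ≤ bb) (hbb' : 1 ≤ bb') (hC : 1 ≤ C) (hC' : 1 ≤ C')
    (ha : ∀ n : ℕ, IsIntegral ℤ ((D (bb * n) : ℂ) ^ s * (C : ℂ) ^ (n + 1) * a n))
    (hb : ∀ n : ℕ, IsIntegral ℤ ((D (bb' * n) : ℂ) ^ s * (C' : ℂ) ^ (n + 1) * b n))
    (lam mu : ℂ) (hlam : IsAlgebraic ℚ lam) (hmu : IsAlgebraic ℚ mu) :
    ∃ b'' C'' : ℕ, 0 < b'' ∧ 0 < C'' ∧ ∀ n : ℕ,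
      IsIntegral ℤ ((D (b'' * n) : ℂ) ^ s * (C'' : ℂ) ^ (n + 1) * (lam * a n + mu * b n)) :=
  linear_combination_denominators_general a b s bb bb' C C' hC hC' ha hb lam mu hlam hmu
end
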